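/- Let M > 0 be a real random variable on a probability space and let α ∈ (0,1). Then E[Φ(log(1/α)/M + M/2)] ≥ Φ(√(2·log(1/α))) > 1 − α. -/

import Mathlib

open MeasureTheory Real

/-- The standard normal cumulative distribution function. -/
noncomputable def Phi (t : ℝ) : ℝ :=
  (Real.sqrt (2 * Real.pi))⁻¹ * ∫ x in Set.Iic t, Real.exp (-x ^ 2 / 2)

/-!
By AM–GM, `L / m + m / 2 ≥ √(2L)` for every `m > 0`, so monotonicity of `Φ` gives the lower
bound on the expectation pointwise. For the strict inequality, the Gaussian tail satisfies
`1 - Φ(s) ≤ exp(-s²/2) / 2` for `s ≥ 0`: shift the tail integral onto `(0, ∞)` and use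
`(u + s)² ≥ u² + s²`. At `s = √(2 log(1/α))` this reads `1 - Φ(s) ≤ α / 2 < α`.
-/

open Set

lemma exp_neg_sq_div_two_eq :
    (fun x : ℝ => exp (-x ^ 2 / 2)) = fun x => exp (-(1 / 2 : ℝ) * x ^ 2) := by
  funext x; ring_nf

lemma integrable_exp_neg_sq_div_two : Integrable fun x : ℝ => exp (-x ^ 2 / 2) := by
  rw [exp_neg_sq_div_two_eq]
  exact integrable_exp_neg_mul_sq (by norm_num)

lemma integral_exp_neg_sq_div_two : ∫ x : ℝ, exp (-x ^ 2 / 2) = √(2 * π) := by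
  rw [exp_neg_sq_div_two_eq, integral_gaussian]
  congr 1; ring

lemma integral_Ioi_zero_exp_neg_sq_div_two :
    ∫ x in Ioi (0 : ℝ), exp (-x ^ 2 / 2) = √(2 * π) / 2 := by
  rw [exp_neg_sq_div_two_eq, integral_gaussian_Ioi]
  congr 2; ring

lemma integral_Ioi_exp_neg_sq_div_two_le {s : ℝ} (hs : 0 ≤ s) :
    ∫ x in Ioi s, exp (-x ^ 2 / 2) ≤ exp (-s ^ 2 / 2) * (√(2 * π) / 2) := by
  have hshift : ∫ x in Ioi s, exp (-x ^ 2 / 2) = ∫ u in Ioi 0, exp (-(u + s) ^ 2 / 2) := by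
    rw [← (measurePreserving_add_right volume s).setIntegral_preimage_emb
      (MeasurableEquiv.addRight s).measurableEmbedding]
    congr 1
    ext x; simp
  calc ∫ x in Ioi s, exp (-x ^ 2 / 2)
      = ∫ u in Ioi 0, exp (-(u + s) ^ 2 / 2) := hshift
    _ ≤ ∫ u in Ioi 0, exp (-s ^ 2 / 2) * exp (-u ^ 2 / 2) := by
      refine setIntegral_mono_on (integrable_exp_neg_sq_div_two.comp_add_right s).integrableOn
        (integrable_exp_neg_sq_div_two.const_mul _).integrableOn measurableSet_Ioi
        fun u (hu : 0 < u) => ?_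
      rw [← exp_add, exp_le_exp]
      nlinarith
    _ = exp (-s ^ 2 / 2) * (√(2 * π) / 2) := by
      rw [integral_const_mul, integral_Ioi_zero_exp_neg_sq_div_two]

lemma one_sub_Phi (s : ℝ) : 1 - Phi s = (√(2 * π))⁻¹ * ∫ x in Ioi s, exp (-x ^ 2 / 2) := by
  have hsplit := intervalIntegral.integral_Iic_add_Ioi (b := s)
    integrable_exp_neg_sq_div_two.integrableOn integrable_exp_neg_sq_div_two.integrableOn
  rw [integral_exp_neg_sq_div_two] at hsplit
  rw [Phi, eq_sub_of_add_eq hsplit, mul_sub, inv_mul_cancel₀ (by positivity), sub_sub_cancel]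

lemma Phi_nonneg (t : ℝ) : 0 ≤ Phi t :=
  mul_nonneg (by positivity) (setIntegral_nonneg measurableSet_Iic fun _ _ => (exp_pos _).le)

lemma Phi_le_one (t : ℝ) : Phi t ≤ 1 := by
  have h : 0 ≤ 1 - Phi t := (one_sub_Phi t).symm ▸
    mul_nonneg (by positivity) (setIntegral_nonneg measurableSet_Ioi fun _ _ => (exp_pos _).le)
  linarith

lemma Phi_mono : Monotone Phi := fun a b hab =>
  mul_le_mul_of_nonneg_left
    (setIntegral_mono_set integrable_exp_neg_sq_div_two.integrableOn
      (ae_of_all _ fun _ => (exp_pos _).le) (ae_of_all _ fun _ hx => le_trans hx hab))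
    (by positivity)

lemma one_sub_Phi_le {s : ℝ} (hs : 0 ≤ s) : 1 - Phi s ≤ exp (-s ^ 2 / 2) / 2 := by
  calc 1 - Phi s = (√(2 * π))⁻¹ * ∫ x in Ioi s, exp (-x ^ 2 / 2) := one_sub_Phi s
    _ ≤ (√(2 * π))⁻¹ * (exp (-s ^ 2 / 2) * (√(2 * π) / 2)) :=
      mul_le_mul_of_nonneg_left (integral_Ioi_exp_neg_sq_div_two_le hs) (by positivity)
    _ = exp (-s ^ 2 / 2) / 2 := by field_simp

lemma integrable_Phi_comp {Ω : Type*} [MeasurableSpace Ω] {μ : Measure Ω} [IsFiniteMeasure μ]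
    {f : Ω → ℝ} (hf : AEMeasurable f μ) : Integrable (fun ω => Phi (f ω)) μ :=
  Integrable.of_bound (Phi_mono.measurable.comp_aemeasurable hf).aestronglyMeasurable 1
    (ae_of_all _ fun ω => by rw [norm_of_nonneg (Phi_nonneg _)]; exact Phi_le_one _)

lemma Phi_le_integral_Phi_comp {Ω : Type*} [MeasurableSpace Ω] {P : Measure Ω}
    [IsProbabilityMeasure P] {f : Ω → ℝ} (hf : AEMeasurable f P) {a : ℝ}
    (ha : ∀ᵐ ω ∂P, a ≤ f ω) : Phi a ≤ ∫ ω, Phi (f ω) ∂P := by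
  calc Phi a = ∫ _, Phi a ∂P := by simp
    _ ≤ ∫ ω, Phi (f ω) ∂P :=
      integral_mono_ae (integrable_const _) (integrable_Phi_comp hf) (ha.mono fun _ h => Phi_mono h)

lemma sqrt_two_mul_le_div_add_div_two {L m : ℝ} (hL : 0 ≤ L) (hm : 0 < m) :
    √(2 * L) ≤ L / m + m / 2 := by
  have hsq : √(2 * L) ^ 2 = 2 * L := sq_sqrt (by positivity)
  rw [div_add_div _ _ hm.ne' two_ne_zero, le_div_iff₀ (by positivity)]
  nlinarith [sq_nonneg (m - √(2 * L))]

/-- Corollary 2 under correct specification: for a positive random variable `M` and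
`α ∈ (0,1)`, `E[Φ(log(1/α)/M + M/2)] ≥ Φ(√(2 log(1/α))) > 1 − α`. -/
theorem universal_inference_never_exact
    {Ω : Type*} [MeasurableSpace Ω] (P : Measure Ω) [IsProbabilityMeasure P]
    (M : Ω → ℝ) (hM : Measurable M) (hMpos : ∀ᵐ ω ∂P, 0 < M ω)
    (α : ℝ) (hα0 : 0 < α) (hα1 : α < 1) :
    Phi (Real.sqrt (2 * Real.log (1 / α))) ≤
        ∫ ω, Phi (Real.log (1 / α) / M ω + M ω / 2) ∂P ∧
      1 - α < Phi (Real.sqrt (2 * Real.log (1 / α))) := by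
  set L := log (1 / α)
  have hL : 0 ≤ L := log_nonneg (by rw [le_div_iff₀ hα0]; linarith)
  refine ⟨Phi_le_integral_Phi_comp ((hM.const_div L).add (hM.div_const 2)).aemeasurable
    (hMpos.mono fun ω => sqrt_two_mul_le_div_add_div_two hL), ?_⟩
  have hexp : exp (-√(2 * L) ^ 2 / 2) = α := by
    rw [sq_sqrt (by positivity), show -(2 * L) / 2 = -L by ring, exp_neg, exp_log (by positivity)]
    simp
  have htail := one_sub_Phi_le (sqrt_nonneg (2 * L))
  rw [hexp] at htail
  linarith
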